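/- Let A : H → F be bounded and W : F → F positive semidefinite. Then A admits a W-inverse (equivalently, R(A) + W^{-1}(R(A)^⊥) = F) if and only if R(A) + N(W) is a closed subspace of F and F = (R(A)+N(W)) + W((R(A)+N(W)))^⊥ (i.e. the pair (W, R(A)+N(W)) is compatible). -/

import Mathlib

/-!
Write `W = R ^ 2` with `R = √W`, so that `re ⟪W v, v⟫ = ‖R v‖ ^ 2`. By the nearest-point
characterisation in a Hilbert space, `G` is a `W`-inverse of `A` iff every residual `A (G x) - x`
lies in `T = W(R(A))ᗮ`; hence a `W`-inverse exists iff `R(A) + T = F`, a bounded `G` being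
obtained from a bounded right inverse (open mapping theorem) of `A` compressed to `Tᗮ`.
Since `N(W) ⊆ T` and `W(R(A) + N(W)) = W(R(A))`, this is the compatibility identity for
`R(A) + N(W)`, and it forces closedness: a `t ∈ T` in the closure of `R(A) + N(W)` satisfies
`⟪W t, t⟫ = 0`, hence `W t = 0`.
-/

open scoped InnerProductSpace

section Hilbert

variable {𝕜 E F : Type*} [RCLike 𝕜] [NormedAddCommGroup E] [InnerProductSpace 𝕜 E]
  [NormedAddCommGroup F] [InnerProductSpace 𝕜 F]

theorem Submodule.forall_norm_sub_le_iff_inner_eq_zero (K : Submodule 𝕜 E) {u v : E}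
    (hv : v ∈ K) : (∀ w ∈ K, ‖u - v‖ ≤ ‖u - w‖) ↔ ∀ w ∈ K, ⟪u - v, w⟫_𝕜 = 0 := by
  have : Nonempty K := ⟨⟨v, hv⟩⟩
  have hbdd : BddBelow (Set.range fun w : K => ‖u - w‖) := ⟨0, by rintro _ ⟨w, rfl⟩; positivity⟩
  rw [← K.norm_eq_iInf_iff_inner_eq_zero hv]
  refine ⟨fun h => le_antisymm (le_ciInf fun w => h w w.2) (ciInf_le hbdd ⟨v, hv⟩),
    fun h w hw => h ▸ ciInf_le hbdd ⟨w, hw⟩⟩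

theorem ContinuousLinearMap.hasRightInverse_of_surjective [CompleteSpace E] [CompleteSpace F]
    {f : E →L[𝕜] F} (hf : Function.Surjective f) : f.HasRightInverse := by
  set N := LinearMap.ker (f : E →ₗ[𝕜] F)
  set K := Nᗮ
  have : CompleteSpace N := f.isClosed_ker.completeSpace_coe
  have hinj : LinearMap.ker (f.comp K.subtypeL : K →ₗ[𝕜] F) = ⊥ := by
    refine LinearMap.ker_eq_bot'.2 fun x hx => Subtype.ext ?_
    exact (Submodule.inf_orthogonal_eq_bot N).le ⟨hx, x.2⟩
  have hsurj : LinearMap.range (f.comp K.subtypeL : K →ₗ[𝕜] F) = ⊤ := by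
    refine LinearMap.range_eq_top.2 fun y => ?_
    obtain ⟨x, rfl⟩ := hf y
    refine ⟨⟨_, N.sub_starProjection_mem_orthogonal x⟩, ?_⟩
    have hPx : f (N.starProjection x) = 0 := N.starProjection_apply_mem x
    simp [hPx]
  let e := ContinuousLinearEquiv.ofBijective (f.comp K.subtypeL) hinj hsurj
  exact ⟨K.subtypeL.comp (e.symm : F →L[𝕜] K), fun y => e.apply_symm_apply y⟩

theorem ContinuousLinearMap.exists_apply_sub_mem_of_range_sup_eq_top [CompleteSpace E]
    [CompleteSpace F] (A : E →L[𝕜] F) {T : Submodule 𝕜 F} [T.HasOrthogonalProjection]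
    (hT : LinearMap.range (A : E →ₗ[𝕜] F) ⊔ T = ⊤) : ∃ G : F →L[𝕜] E, ∀ x, A (G x) - x ∈ T := by
  set Q := Tᗮ.orthogonalProjectionOnto
  have hQ : ∀ {y}, Q y = 0 ↔ y ∈ T := by
    intro y
    rw [Submodule.orthogonalProjectionOnto_eq_zero_iff, Submodule.orthogonal_orthogonal]
  have hQA : Function.Surjective (Q.comp A) := by
    intro y
    obtain ⟨_, ⟨h, rfl⟩, t, ht, hy⟩ := Submodule.mem_sup.1 (hT ▸ Submodule.mem_top (x := (y : F)))
    have hAh : A h = y - t := eq_sub_of_add_eq hy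
    refine ⟨h, ?_⟩
    rw [ContinuousLinearMap.comp_apply, hAh, map_sub, hQ.2 ht, sub_zero,
      Submodule.orthogonalProjectionOnto_mem_subspace_eq_self]
  obtain ⟨G₀, hG₀⟩ := hasRightInverse_of_surjective hQA
  refine ⟨G₀.comp Q, fun x => hQ.1 ?_⟩
  rw [map_sub, ← ContinuousLinearMap.comp_apply Q A, ContinuousLinearMap.comp_apply G₀, hG₀,
    sub_self]

theorem ContinuousLinearMap.IsPositive.mem_orthogonal_map_iff {W : E →L[𝕜] E} (hW : W.IsPositive)
    (K : Submodule 𝕜 E) {x : E} :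
    x ∈ (K.map (W : E →ₗ[𝕜] E))ᗮ ↔ W x ∈ Kᗮ := by
  simp only [Submodule.mem_orthogonal, Submodule.mem_map, forall_exists_index, and_imp,
    forall_apply_eq_imp_iff₂, ContinuousLinearMap.coe_coe, hW.inner_left_eq_inner_right]

end Hilbert

namespace ContinuousLinearMap.IsPositive

variable {E : Type*} [NormedAddCommGroup E] [InnerProductSpace ℂ E] [CompleteSpace E]
  {W : E →L[ℂ] E}

theorem inner_apply_eq_inner_sqrt (hW : W.IsPositive) (x y : E) :
    ⟪W x, y⟫_ℂ = ⟪CFC.sqrt W x, CFC.sqrt W y⟫_ℂ := by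
  have : 0 ≤ W := (nonneg_iff_isPositive W).2 hW
  conv_lhs => rw [← CFC.sqrt_mul_sqrt_self W]
  exact (CFC.sqrt_nonneg W).isSelfAdjoint.isSymmetric _ _

theorem re_inner_apply_self_eq_norm_sqrt_sq (hW : W.IsPositive) (x : E) :
    (⟪W x, x⟫_ℂ).re = ‖CFC.sqrt W x‖ ^ 2 := by
  rw [hW.inner_apply_eq_inner_sqrt]
  exact inner_self_eq_norm_sq (𝕜 := ℂ) _

theorem apply_eq_zero_of_inner_apply_self_eq_zero (hW : W.IsPositive) {x : E}
    (hx : ⟪W x, x⟫_ℂ = 0) : W x = 0 := by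
  have : 0 ≤ W := (nonneg_iff_isPositive W).2 hW
  have hsqrt : CFC.sqrt W x = 0 := by
    rw [← inner_self_eq_zero (𝕜 := ℂ), ← hW.inner_apply_eq_inner_sqrt, hx]
  rw [← CFC.sqrt_mul_sqrt_self W]
  change CFC.sqrt W (CFC.sqrt W x) = 0
  rw [hsqrt, map_zero]

theorem forall_re_inner_le_iff_mem_orthogonal_map (hW : W.IsPositive) (K : Submodule ℂ E)
    {x y : E} (hy : y ∈ K) :
    (∀ k ∈ K, (⟪W (y - x), y - x⟫_ℂ).re ≤ (⟪W (k - x), k - x⟫_ℂ).re) ↔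
      y - x ∈ (K.map (W : E →ₗ[ℂ] E))ᗮ := by
  set R := CFC.sqrt W
  have hq : ∀ k, (⟪W (k - x), k - x⟫_ℂ).re = ‖R x - R k‖ ^ 2 := fun k => by
    rw [hW.re_inner_apply_self_eq_norm_sqrt_sq, norm_sub_rev, ← map_sub]
  calc _ ↔ ∀ w ∈ K.map (R : E →ₗ[ℂ] E), ‖R x - R y‖ ≤ ‖R x - w‖ := by
        simp only [hq, Submodule.mem_map, forall_exists_index, and_imp, forall_apply_eq_imp_iff₂,
          ContinuousLinearMap.coe_coe, sq_le_sq₀ (norm_nonneg _) (norm_nonneg _)]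
    _ ↔ ∀ w ∈ K.map (R : E →ₗ[ℂ] E), ⟪R x - R y, w⟫_ℂ = 0 :=
        Submodule.forall_norm_sub_le_iff_inner_eq_zero _ (Submodule.mem_map_of_mem hy)
    _ ↔ ∀ k ∈ K, ⟪W k, y - x⟫_ℂ = 0 := by
        simp only [Submodule.mem_map, forall_exists_index, and_imp, forall_apply_eq_imp_iff₂,
          ContinuousLinearMap.coe_coe, hW.inner_apply_eq_inner_sqrt, ← map_sub]
        refine forall₂_congr fun k _ => ?_
        rw [inner_eq_zero_symm, ← neg_sub, map_neg, inner_neg_right, neg_eq_zero]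
    _ ↔ _ := by
        simp only [Submodule.mem_orthogonal, Submodule.mem_map, forall_exists_index, and_imp,
          forall_apply_eq_imp_iff₂, ContinuousLinearMap.coe_coe]

end ContinuousLinearMap.IsPositive

section WInverse

variable {H F : Type*} [NormedAddCommGroup H] [InnerProductSpace ℂ H]
  [NormedAddCommGroup F] [InnerProductSpace ℂ F]

def IsWInverse (W : F →L[ℂ] F) (A : H →L[ℂ] F) (G : F →L[ℂ] H) : Prop :=
  ∀ (x : F) (z : H), (⟪W (A (G x) - x), A (G x) - x⟫_ℂ).re ≤ (⟪W (A z - x), A z - x⟫_ℂ).re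

variable [CompleteSpace F] {W : F →L[ℂ] F}

theorem isWInverse_iff (hW : W.IsPositive) (A : H →L[ℂ] F) (G : F →L[ℂ] H) :
    IsWInverse W A G ↔
      ∀ x, A (G x) - x ∈ ((LinearMap.range (A : H →ₗ[ℂ] F)).map (W : F →ₗ[ℂ] F))ᗮ := by
  refine forall_congr' fun x => ?_
  rw [← hW.forall_re_inner_le_iff_mem_orthogonal_map (LinearMap.range (A : H →ₗ[ℂ] F))
    (y := A (G x)) ⟨G x, rfl⟩]
  simp only [LinearMap.mem_range, forall_exists_index, forall_apply_eq_imp_iff,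
    ContinuousLinearMap.coe_coe]

theorem exists_isWInverse_iff [CompleteSpace H] (hW : W.IsPositive) (A : H →L[ℂ] F) :
    (∃ G, IsWInverse W A G) ↔
      LinearMap.range (A : H →ₗ[ℂ] F) ⊔
        ((LinearMap.range (A : H →ₗ[ℂ] F)).map (W : F →ₗ[ℂ] F))ᗮ = ⊤ := by
  simp only [isWInverse_iff hW]
  refine ⟨fun ⟨G, hG⟩ => Submodule.eq_top_iff'.2 fun x => ?_,
    A.exists_apply_sub_mem_of_range_sup_eq_top⟩
  rw [← sub_sub_cancel (A (G x)) x]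
  exact sub_mem (Submodule.mem_sup_left (LinearMap.mem_range_self _ _))
    (Submodule.mem_sup_right (hG x))

theorem ContinuousLinearMap.IsPositive.isClosed_sup_ker (hW : W.IsPositive) {S : Submodule ℂ F}
    (h : S ⊔ (S.map (W : F →ₗ[ℂ] F))ᗮ = ⊤) :
    IsClosed ((S ⊔ LinearMap.ker (W : F →ₗ[ℂ] F) : Submodule ℂ F) : Set F) := by
  set N := LinearMap.ker (W : F →ₗ[ℂ] F)
  refine isClosed_of_closure_subset fun x hx => ?_
  obtain ⟨s, hs, t, ht, rfl⟩ := Submodule.mem_sup.1 (h ▸ Submodule.mem_top (x := x))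
  have htcl : t ∈ (S ⊔ N).topologicalClosure := by
    simpa using sub_mem (hx : s + t ∈ (S ⊔ N).topologicalClosure)
      ((S ⊔ N).le_topologicalClosure (Submodule.mem_sup_left hs))
  have hWt : W t ∈ (S ⊔ N)ᗮ := by
    rw [← Submodule.inf_orthogonal]
    refine ⟨(hW.mem_orthogonal_map_iff S).1 ht, (Submodule.mem_orthogonal _ _).2 fun n hn => ?_⟩
    rw [← hW.inner_left_eq_inner_right, show W n = 0 from hn, inner_zero_left]
  have hWt0 : W t = 0 := hW.apply_eq_zero_of_inner_apply_self_eq_zero <|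
    (Submodule.mem_orthogonal' _ _).1 (by rwa [Submodule.orthogonal_closure]) t htcl
  exact add_mem (Submodule.mem_sup_left hs) (Submodule.mem_sup_right hWt0)

end WInverse

theorem stmt_4_general {H F : Type*} [NormedAddCommGroup H] [InnerProductSpace ℂ H] [CompleteSpace H]
    [NormedAddCommGroup F] [InnerProductSpace ℂ F] [CompleteSpace F]
    (A : H →L[ℂ] F) (W : F →L[ℂ] F) (hW : W.IsPositive) :
    (∃ G : F →L[ℂ] H, ∀ (x : F) (z : H),
        (inner ℂ (W (A (G x) - x)) (A (G x) - x) : ℂ).re ≤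
          (inner ℂ (W (A z - x)) (A z - x) : ℂ).re) ↔
      (IsClosed ((LinearMap.range (A : H →ₗ[ℂ] F) ⊔ LinearMap.ker (W : F →ₗ[ℂ] F) : Submodule ℂ F) : Set F) ∧
        (LinearMap.range (A : H →ₗ[ℂ] F) ⊔ LinearMap.ker (W : F →ₗ[ℂ] F)) ⊔
          (Submodule.map (W : F →ₗ[ℂ] F) (LinearMap.range (A : H →ₗ[ℂ] F) ⊔ LinearMap.ker (W : F →ₗ[ℂ] F)))ᗮ = ⊤) := by
  set S := LinearMap.range (A : H →ₗ[ℂ] F)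
  set N := LinearMap.ker (W : F →ₗ[ℂ] F)
  have hmap : (S ⊔ N).map (W : F →ₗ[ℂ] F) = S.map (W : F →ₗ[ℂ] F) := by
    rw [Submodule.map_sup, LinearMap.le_ker_iff_map.1 le_rfl, sup_bot_eq]
  have hN : N ≤ (S.map (W : F →ₗ[ℂ] F))ᗮ := fun n hn =>
    (hW.mem_orthogonal_map_iff S).2 (by rw [show W n = 0 from hn]; exact zero_mem _)
  rw [hmap, sup_assoc, sup_eq_right.2 hN]
  exact (exists_isWInverse_iff hW A).trans ⟨fun h => ⟨hW.isClosed_sup_ker h, h⟩, And.right⟩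

/-- `A` admits a `W`-inverse iff `R(A) + N(W)` is closed and the pair `(W, R(A)+N(W))` is
compatible. -/
theorem stmt_4 {H F : Type*} [NormedAddCommGroup H] [InnerProductSpace ℂ H] [CompleteSpace H]
    [NormedAddCommGroup F] [InnerProductSpace ℂ F] [CompleteSpace F]
    [TopologicalSpace.SeparableSpace H] [TopologicalSpace.SeparableSpace F]
    (A : H →L[ℂ] F) (W : F →L[ℂ] F) (hW : W.IsPositive) :
    (∃ G : F →L[ℂ] H, ∀ (x : F) (z : H),
        (inner ℂ (W (A (G x) - x)) (A (G x) - x) : ℂ).re ≤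
          (inner ℂ (W (A z - x)) (A z - x) : ℂ).re) ↔
      (IsClosed ((LinearMap.range (A : H →ₗ[ℂ] F) ⊔ LinearMap.ker (W : F →ₗ[ℂ] F) : Submodule ℂ F) : Set F) ∧
        (LinearMap.range (A : H →ₗ[ℂ] F) ⊔ LinearMap.ker (W : F →ₗ[ℂ] F)) ⊔
          (Submodule.map (W : F →ₗ[ℂ] F) (LinearMap.range (A : H →ₗ[ℂ] F) ⊔ LinearMap.ker (W : F →ₗ[ℂ] F)))ᗮ = ⊤) :=
  stmt_4_general A W hW
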